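/- Let G be a chordal graph realized by an expanded tree model with rooted host tree, and let u, v ∈ V(G) with u < v and uv ∈ E(G). Then the sets V_{u'} over u' ∈ ◁uv (the maximal vertices of V_u \ (N[u] ∩ N(v))) form a partition of V_u \ (N[u] ∩ N(v)) into pairwise disconnected sets: no edge of G joins two distinct parts. -/
import Mathlib


/-- Descendant order in a rooted tree given by a parent function
(edges directed toward the root). -/
def Desc {N : Type*} (parent : N → N) : N → N → Prop :=
  Relation.ReflTransGen (fun a b => b = parent a)

/-- A tree model of a graph `G` on a rooted host tree: each vertex `v`
corresponds to a subtree `Sub v` with root `root v` (the node of `Sub v`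
closest to the root of the host tree), and adjacency in `G` is exactly
intersection of the subtrees. -/
structure TreeModel (V N : Type*) where
  parent : N → N
  acyclic : ∀ x y : N, Desc parent x y → Desc parent y x → x = y
  G : SimpleGraph V
  Sub : V → Set N
  root : V → N
  root_mem : ∀ v : V, root v ∈ Sub v
  root_max : ∀ v : V, ∀ x ∈ Sub v, Desc parent x (root v)
  convex : ∀ v : V, ∀ x y : N, x ∈ Sub v → Desc parent x y →
    Desc parent y (root v) → y ∈ Sub v
  adj_iff : ∀ u v : V, u ≠ v → (G.Adj u v ↔ (Sub u ∩ Sub v).Nonempty)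

namespace TreeModel

variable {V N : Type*}

/-- `u ≤ v` iff `r(u)` is a descendant of `r(v)`. -/
def vle (M : TreeModel V N) (u v : V) : Prop :=
  Desc M.parent (M.root u) (M.root v)

/-- `u < v` iff `r(u)` is a strict descendant of `r(v)`. -/
def vlt (M : TreeModel V N) (u v : V) : Prop :=
  M.vle u v ∧ M.root u ≠ M.root v

/-- `V_u = {w : w ≤ u}`. -/
def Vset (M : TreeModel V N) (u : V) : Set V := {w | M.vle w u}

/-- The maximal proper predecessors `◁u` of `u`. -/
def maxPreds (M : TreeModel V N) (u : V) : Set V :=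
  {w | w ∈ M.Vset u \ {u} ∧ ∀ z ∈ M.Vset u \ {u}, M.vle w z → z = w}

end TreeModel

lemma desc_iff_iterate {N : Type*} (p : N → N) (x y : N) :
    Desc p x y ↔ ∃ n, y = p^[n] x := by
  constructor
  · intro h
    induction h with
    | refl => exact ⟨0, rfl⟩
    | tail _ hstep ih =>
      obtain ⟨n, rfl⟩ := ih
      exact ⟨n + 1, by rw [Function.iterate_succ_apply']; exact hstep⟩
  · rintro ⟨n, rfl⟩
    induction n with
    | zero => exact Relation.ReflTransGen.refl
    | succ n ih => exact ih.tail (by rw [Function.iterate_succ_apply'])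

lemma desc_total {N : Type*} (p : N → N) {x y z : N}
    (hy : Desc p x y) (hz : Desc p x z) : Desc p y z ∨ Desc p z y := by
  rw [desc_iff_iterate] at hy hz
  obtain ⟨m, rfl⟩ := hy
  obtain ⟨n, rfl⟩ := hz
  rcases le_total m n with h | h
  · exact Or.inl ((desc_iff_iterate p _ _).mpr
      ⟨n - m, by rw [← Function.iterate_add_apply, Nat.sub_add_cancel h]⟩)
  · exact Or.inr ((desc_iff_iterate p _ _).mpr
      ⟨m - n, by rw [← Function.iterate_add_apply, Nat.sub_add_cancel h]⟩)

lemma exists_max_above {V N : Type*} [Finite V] (M : TreeModel V N)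
    (hexp : Function.Injective M.root) (D : Set V) :
    ∀ x ∈ D, ∃ w, (w ∈ D ∧ ∀ z ∈ D, M.vle w z → z = w) ∧ M.vle x w := by
  have key : ∀ n (x : V), ({z | M.vle x z}).ncard ≤ n → x ∈ D →
      ∃ w, (w ∈ D ∧ ∀ z ∈ D, M.vle w z → z = w) ∧ M.vle x w := by
    intro n
    induction n with
    | zero =>
      intro x hn hx
      exfalso
      have hpos : 0 < ({z | M.vle x z}).ncard :=
        (Set.ncard_pos (Set.toFinite _)).mpr ⟨x, Relation.ReflTransGen.refl⟩
      omega
    | succ n ih =>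
      intro x hn hx
      by_cases hmax : ∀ z ∈ D, M.vle x z → z = x
      · exact ⟨x, ⟨hx, hmax⟩, Relation.ReflTransGen.refl⟩
      · push_neg at hmax
        obtain ⟨z, hzD, hxz, hne⟩ := hmax
        have hsub : {y | M.vle z y} ⊂ {y | M.vle x y} := by
          constructor
          · intro y hy; exact hxz.trans hy
          · intro hcon
            have : M.vle z x := hcon (Relation.ReflTransGen.refl)
            exact hne (hexp (M.acyclic _ _ hxz this)).symm
        have hlt := Set.ncard_lt_ncard hsub (Set.toFinite _)
        obtain ⟨w, hw, hzw⟩ := ih z (by omega) hzD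
        exact ⟨w, hw, hxz.trans hzw⟩
  intro x hx
  exact key _ x le_rfl hx

/-- For adjacent `u < v`, the sets `V_{u'}` over `u' ∈ ◁uv` (the maximal
vertices of `V_u \ (N[u] ∩ N(v))`) partition `V_u \ (N[u] ∩ N(v))` into
pairwise disconnected sets. -/
theorem stmt19 {V N : Type*} [Finite V] (M : TreeModel V N)
    (hexp : Function.Injective M.root)
    (u v : V) (hlt : M.vlt u v) (hadj : M.G.Adj u v) :
    let D : Set V := M.Vset u \ ((insert u (M.G.neighborSet u)) ∩ M.G.neighborSet v)
    let maxD : Set V := {w | w ∈ D ∧ ∀ z ∈ D, M.vle w z → z = w}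
    (∀ w ∈ maxD, M.Vset w ⊆ D) ∧
    (∀ x ∈ D, ∃! w : V, w ∈ maxD ∧ x ∈ M.Vset w) ∧
    (∀ w1 ∈ maxD, ∀ w2 ∈ maxD, w1 ≠ w2 →
      ∀ a ∈ M.Vset w1, ∀ b ∈ M.Vset w2, ¬ M.G.Adj a b) := by
  intro D maxD
  have vle_antisymm : ∀ {a b : V}, M.vle a b → M.vle b a → a = b :=
    fun h1 h2 => hexp (M.acyclic _ _ h1 h2)
  have hne_uv : u ≠ v := hadj.ne
  -- Lemma A : the "bad" set is upward closed below u
  have lemA : ∀ x w : V, x ∈ (insert u (M.G.neighborSet u)) ∩ M.G.neighborSet v →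
      M.vle x w → M.vle w u →
      w ∈ (insert u (M.G.neighborSet u)) ∩ M.G.neighborSet v := by
    intro x w hx hxw hwu
    obtain ⟨hxu, hxv⟩ := hx
    rw [SimpleGraph.mem_neighborSet] at hxv
    have hw_ne_v : w ≠ v := by
      intro h; subst h
      exact hlt.2 (M.acyclic _ _ hlt.1 hwu)
    rcases Set.mem_insert_iff.mp hxu with h | h
    · have hwu_eq : w = u := vle_antisymm hwu (h ▸ hxw)
      subst hwu_eq
      exact ⟨Set.mem_insert _ _, SimpleGraph.mem_neighborSet _ _ _ |>.mpr hadj.symm⟩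
    · rw [SimpleGraph.mem_neighborSet] at h
      -- h : M.G.Adj u x,  hxv : M.G.Adj v x
      obtain ⟨p, hpu, hpx⟩ := (M.adj_iff u x h.ne).mp h
      obtain ⟨q, hqv, hqx⟩ := (M.adj_iff v x hxv.ne).mp hxv
      have hxu' : M.vle x u := hxw.trans hwu
      have hrxu : M.root x ∈ M.Sub u := M.convex u p _ hpu (M.root_max x p hpx) hxu'
      have hrwu : M.root w ∈ M.Sub u := M.convex u _ _ hrxu hxw hwu
      have hrxv : M.root x ∈ M.Sub v := M.convex v q _ hqv (M.root_max x q hqx) (hxu'.trans hlt.1)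
      have hrwv : M.root w ∈ M.Sub v := M.convex v _ _ hrxv hxw (hwu.trans hlt.1)
      constructor
      · by_cases hwu' : w = u
        · exact hwu' ▸ Set.mem_insert _ _
        · exact Set.mem_insert_of_mem _ ((SimpleGraph.mem_neighborSet _ _ _).mpr
            ((M.adj_iff u w (Ne.symm hwu')).mpr ⟨M.root w, hrwu, M.root_mem w⟩))
      · exact (SimpleGraph.mem_neighborSet _ _ _).mpr
          ((M.adj_iff v w (Ne.symm hw_ne_v)).mpr ⟨M.root w, hrwv, M.root_mem w⟩)
  -- incomparability of distinct maximal elements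
  have incomp : ∀ w1 ∈ maxD, ∀ w2 ∈ maxD, w1 ≠ w2 → ¬ M.vle w1 w2 ∧ ¬ M.vle w2 w1 := by
    intro w1 hw1 w2 hw2 hne
    constructor
    · intro h; exact hne (hw1.2 w2 hw2.1 h).symm
    · intro h; exact hne (hw2.2 w1 hw1.1 h)
  refine ⟨?_, ?_, ?_⟩
  · -- downward closure
    intro w hw x hx
    have hxw : M.vle x w := hx
    refine ⟨hxw.trans hw.1.1, ?_⟩
    intro hbad
    exact hw.1.2 (lemA x w hbad hxw hw.1.1)
  · -- existence and uniqueness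
    intro x hx
    obtain ⟨w, hwmax, hxw⟩ := exists_max_above M hexp D x hx
    refine ⟨w, ⟨hwmax, hxw⟩, ?_⟩
    rintro y ⟨hymax, hxy⟩
    rcases desc_total M.parent hxy hxw with h | h
    · exact hymax.2 w hwmax.1 h ▸ (hwmax.2 y hymax.1 ((hymax.2 w hwmax.1 h) ▸ Relation.ReflTransGen.refl))
    · exact hwmax.2 y hymax.1 h
  · -- nonadjacency across parts
    intro w1 hw1 w2 hw2 hne a ha b hb hab
    obtain ⟨p, hpa, hpb⟩ := (M.adj_iff a b hab.ne).mp hab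
    have hpar : Desc M.parent p (M.root a) := M.root_max a p hpa
    have hpbr : Desc M.parent p (M.root b) := M.root_max b p hpb
    have hcomp := incomp w1 hw1 w2 hw2 hne
    rcases desc_total M.parent hpar hpbr with h | h
    · -- a ≤ b ≤ w2 and a ≤ w1
      have h1 : Desc M.parent (M.root a) (M.root w1) := ha
      have h2 : Desc M.parent (M.root a) (M.root w2) := (Relation.ReflTransGen.trans h hb)
      rcases desc_total M.parent h1 h2 with h' | h'
      · exact hcomp.1 h'
      · exact hcomp.2 h'
    · have h1 : Desc M.parent (M.root b) (M.root w1) := (Relation.ReflTransGen.trans h ha)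
      have h2 : Desc M.parent (M.root b) (M.root w2) := hb
      rcases desc_total M.parent h1 h2 with h' | h'
      · exact hcomp.1 h'
      · exact hcomp.2 h'
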